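/- arXiv:2508.16935 — 4 statements merged into one kernel-verified Lean document; each statement's English description precedes it below -/
import Mathlib

section
/- The functions ρ(x,t) = (p₁/t)·exp((t ln t − x − b)/(tA)) and u(x,t) = (x+b)/t + 1 solve the inviscid traffic flow system ρₜ + (ρu)ₓ = 0, uₜ + u uₓ + (A/ρ)ρₓ = 0 for t > 0, where A ≠ 0, p₁ ≠ 0, b are constants. -/
open Real

/-- ρ(x,t) = (p₁/t)·exp((t ln t − x − b)/(tA)) and u(x,t) = (x+b)/t + 1 solve
the inviscid traffic flow system for t > 0, with A ≠ 0 and p₁ ≠ 0. -/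
theorem stmt5 (A p₁ b : ℝ) (hA : A ≠ 0) (hp₁ : p₁ ≠ 0)
    (ρ u : ℝ → ℝ → ℝ)
    (hρ : ρ = fun x t => (p₁ / t) * Real.exp ((t * Real.log t - x - b) / (t * A)))
    (hu : u = fun x t => (x + b) / t + 1) :
    ∀ x t : ℝ, 0 < t →
      deriv (fun s => ρ x s) t + deriv (fun y => ρ y t * u y t) x = 0 ∧
      deriv (fun s => u x s) t + u x t * deriv (fun y => u y t) x
        + (A / ρ x t) * deriv (fun y => ρ y t) x = 0 := by
  subst hρ hu
  intro x t ht
  have htne : t ≠ 0 := ht.ne'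
  have htA : t * A ≠ 0 := mul_ne_zero htne hA
  set E : ℝ := Real.exp ((t * Real.log t - x - b) / (t * A)) with hE
  have hEpos : E ≠ 0 := (Real.exp_pos _).ne'
  -- spatial derivative of ρ
  have hρx : HasDerivAt (fun y => (p₁ / t) * Real.exp ((t * Real.log t - y - b) / (t * A)))
      ((p₁ / t) * (E * (-1 / (t * A)))) x := by
    have h0 : HasDerivAt (fun y : ℝ => t * Real.log t - y - b) (-1) x := by
      simpa using ((hasDerivAt_id x).const_sub (t * Real.log t)).sub_const b
    have h1 : HasDerivAt (fun y => (t * Real.log t - y - b) / (t * A)) (-1 / (t * A)) x :=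
      h0.div_const (t * A)
    simpa [hE] using h1.exp.const_mul (p₁ / t)
  -- spatial derivative of u
  have hux : HasDerivAt (fun y : ℝ => (y + b) / t + 1) (1 / t) x := by
    simpa using (((hasDerivAt_id x).add_const b).div_const t).add_const 1
  -- time derivative of ρ
  have hN : HasDerivAt (fun s : ℝ => s * Real.log s - x - b) (Real.log t + 1) t := by
    have := (((hasDerivAt_id t).mul (Real.hasDerivAt_log htne)).sub_const x).sub_const b
    simpa [mul_inv_cancel₀ htne, add_comm] using this
  have hD : HasDerivAt (fun s : ℝ => s * A) A t := by
    simpa using (hasDerivAt_id t).mul_const A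
  have hQ : HasDerivAt (fun s => (s * Real.log s - x - b) / (s * A))
      (((Real.log t + 1) * (t * A) - (t * Real.log t - x - b) * A) / (t * A) ^ 2) t :=
    hN.div hD htA
  have hP : HasDerivAt (fun s : ℝ => p₁ / s) ((0 * t - p₁ * 1) / t ^ 2) t :=
    (hasDerivAt_const t p₁).div (hasDerivAt_id t) htne
  have hρt : HasDerivAt (fun s => (p₁ / s) * Real.exp ((s * Real.log s - x - b) / (s * A)))
      ((0 * t - p₁ * 1) / t ^ 2 * E +
        (p₁ / t) * (E * (((Real.log t + 1) * (t * A) - (t * Real.log t - x - b) * A) / (t * A) ^ 2))) t := by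
    simpa [hE] using hP.fun_mul hQ.exp
  -- time derivative of u
  have hut : HasDerivAt (fun s : ℝ => (x + b) / s + 1) ((0 * t - (x + b) * 1) / t ^ 2) t :=
    ((hasDerivAt_const t (x + b)).div (hasDerivAt_id t) htne).add_const 1
  -- product derivative for (ρ u)ₓ
  have hprod : HasDerivAt (fun y => ((p₁ / t) * Real.exp ((t * Real.log t - y - b) / (t * A))) *
      ((y + b) / t + 1))
      ((p₁ / t) * (E * (-1 / (t * A))) * ((x + b) / t + 1) + (p₁ / t) * E * (1 / t)) x := by
    simpa [hE] using hρx.fun_mul hux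
  constructor
  · have e1 : deriv (fun s => (fun x t => (p₁ / t) * Real.exp ((t * Real.log t - x - b) / (t * A))) x s) t
        = (0 * t - p₁ * 1) / t ^ 2 * E +
        (p₁ / t) * (E * (((Real.log t + 1) * (t * A) - (t * Real.log t - x - b) * A) / (t * A) ^ 2)) :=
      hρt.deriv
    have e2 : deriv (fun y => (fun x t => (p₁ / t) * Real.exp ((t * Real.log t - x - b) / (t * A))) y t *
        (fun x t => (x + b) / t + 1) y t) x
        = (p₁ / t) * (E * (-1 / (t * A))) * ((x + b) / t + 1) + (p₁ / t) * E * (1 / t) :=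
      hprod.deriv
    rw [e1, e2]
    field_simp
    ring
  · have e3 : deriv (fun s => (fun x t : ℝ => (x + b) / t + 1) x s) t
        = (0 * t - (x + b) * 1) / t ^ 2 := hut.deriv
    have e4 : deriv (fun y => (fun x t : ℝ => (x + b) / t + 1) y t) x = 1 / t := hux.deriv
    have e5 : deriv (fun y => (fun x t => (p₁ / t) * Real.exp ((t * Real.log t - x - b) / (t * A))) y t) x
        = (p₁ / t) * (E * (-1 / (t * A))) := hρx.deriv
    rw [e3, e4, e5]
    show (0 * t - (x + b) * 1) / t ^ 2 + ((x + b) / t + 1) * (1 / t)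
        + (A / ((p₁ / t) * E)) * ((p₁ / t) * (E * (-1 / (t * A)))) = 0
    field_simp
    ring
end

section
/- Let A > 0 and define ρ(x,t) = 2p₁/(−(x+b) + √((x+b)² − 4At²)) and u(x,t) = ((x+b) + √((x+b)² − 4At²))/(2t), on a domain where t > 0, (x+b)² − 4At² > 0, and x + b < 0 (so ρ is well-defined and nonzero for p₁ ≠ 0). Then (ρ, u) solves ρₜ + (ρu)ₓ = 0 and uₜ + u uₓ + (A/ρ)ρₓ = 0. -/
/-- ρ(x,t) = 2p₁/(−(x+b) + √((x+b)² − 4At²)), u(x,t) = ((x+b) + √((x+b)² − 4At²))/(2t)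
solve the inviscid traffic flow system on the domain where t > 0,
(x+b)² − 4At² > 0 and x + b < 0, for A > 0 and p₁ ≠ 0. -/
theorem stmt7 (A p₁ b : ℝ) (hA : 0 < A) (hp₁ : p₁ ≠ 0)
    (ρ u : ℝ → ℝ → ℝ)
    (hρ : ρ = fun x t => 2 * p₁ / (-(x + b) + Real.sqrt ((x + b) ^ 2 - 4 * A * t ^ 2)))
    (hu : u = fun x t => ((x + b) + Real.sqrt ((x + b) ^ 2 - 4 * A * t ^ 2)) / (2 * t)) :
    ∀ x t : ℝ, 0 < t → (x + b) ^ 2 - 4 * A * t ^ 2 > 0 → x + b < 0 →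
      deriv (fun s => ρ x s) t + deriv (fun y => ρ y t * u y t) x = 0 ∧
      deriv (fun s => u x s) t + u x t * deriv (fun y => u y t) x
        + (A / ρ x t) * deriv (fun y => ρ y t) x = 0 := by
  subst hρ hu
  intro x t ht hD hxb
  set s : ℝ := Real.sqrt ((x + b) ^ 2 - 4 * A * t ^ 2) with hs
  have hspos : 0 < s := Real.sqrt_pos.mpr hD
  have hs2 : s ^ 2 = (x + b) ^ 2 - 4 * A * t ^ 2 := Real.sq_sqrt hD.le
  have hden : 0 < -(x + b) + s := by linarith
  have hden' : (-(x + b) + s) ≠ 0 := hden.ne'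
  have ht' : t ≠ 0 := ht.ne'
  have h2t : (2 : ℝ) * t ≠ 0 := by positivity
  -- inner derivatives
  have hin_t : HasDerivAt (fun t' : ℝ => (x + b) ^ 2 - 4 * A * t' ^ 2)
      (-(4 * A * (2 * t ^ 1))) t := by
    simpa using ((hasDerivAt_pow 2 t).const_mul (4 * A)).const_sub ((x + b) ^ 2)
  have hin_x : HasDerivAt (fun x' : ℝ => (x' + b) ^ 2 - 4 * A * t ^ 2)
      (2 * (x + b) ^ 1 * 1) x := by
    simpa using (((hasDerivAt_id x).add_const b).pow 2).sub_const (4 * A * t ^ 2)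
  -- sqrt derivatives
  have hst : HasDerivAt (fun t' : ℝ => Real.sqrt ((x + b) ^ 2 - 4 * A * t' ^ 2))
      (1 / (2 * s) * -(4 * A * (2 * t ^ 1))) t :=
    (Real.hasDerivAt_sqrt hD.ne').comp t hin_t
  have hsx : HasDerivAt (fun x' : ℝ => Real.sqrt ((x' + b) ^ 2 - 4 * A * t ^ 2))
      (1 / (2 * s) * (2 * (x + b) ^ 1 * 1)) x :=
    (Real.hasDerivAt_sqrt hD.ne').comp x hin_x
  -- ρ derivatives
  have hρt : HasDerivAt (fun t' : ℝ =>
      2 * p₁ / (-(x + b) + Real.sqrt ((x + b) ^ 2 - 4 * A * t' ^ 2)))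
      ((0 * (-(x + b) + s) - 2 * p₁ * (1 / (2 * s) * -(4 * A * (2 * t ^ 1)))) /
        (-(x + b) + s) ^ 2) t :=
    (hasDerivAt_const t (2 * p₁)).div (hst.const_add (-(x + b))) hden'
  have hdenx : HasDerivAt (fun x' : ℝ =>
      -(x' + b) + Real.sqrt ((x' + b) ^ 2 - 4 * A * t ^ 2))
      (-1 + 1 / (2 * s) * (2 * (x + b) ^ 1 * 1)) x := by
    exact (((hasDerivAt_id' x).add_const b).neg).add hsx
  have hρx : HasDerivAt (fun x' : ℝ =>
      2 * p₁ / (-(x' + b) + Real.sqrt ((x' + b) ^ 2 - 4 * A * t ^ 2)))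
      ((0 * (-(x + b) + s) - 2 * p₁ * (-1 + 1 / (2 * s) * (2 * (x + b) ^ 1 * 1))) /
        (-(x + b) + s) ^ 2) x :=
    (hasDerivAt_const x (2 * p₁)).div hdenx hden'
  -- u derivatives
  have hux : HasDerivAt (fun x' : ℝ =>
      ((x' + b) + Real.sqrt ((x' + b) ^ 2 - 4 * A * t ^ 2)) / (2 * t))
      ((1 + 1 / (2 * s) * (2 * (x + b) ^ 1 * 1)) / (2 * t)) x := by
    exact (((hasDerivAt_id x).add_const b).add hsx).div_const (2 * t)
  have hut : HasDerivAt (fun t' : ℝ =>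
      ((x + b) + Real.sqrt ((x + b) ^ 2 - 4 * A * t' ^ 2)) / (2 * t'))
      (((0 + 1 / (2 * s) * -(4 * A * (2 * t ^ 1))) * (2 * t) - ((x + b) + s) * 2) /
        (2 * t) ^ 2) t := by
    have hnum : HasDerivAt (fun t' : ℝ =>
        (x + b) + Real.sqrt ((x + b) ^ 2 - 4 * A * t' ^ 2))
        (0 + 1 / (2 * s) * -(4 * A * (2 * t ^ 1))) t :=
      (hasDerivAt_const t (x + b)).add hst
    have hden2 : HasDerivAt (fun t' : ℝ => 2 * t') (2 : ℝ) t := by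
      simpa using (hasDerivAt_id t).const_mul 2
    exact hnum.div hden2 h2t
  -- ρ*u derivative in x
  have hρux : HasDerivAt (fun x' : ℝ =>
      (2 * p₁ / (-(x' + b) + Real.sqrt ((x' + b) ^ 2 - 4 * A * t ^ 2))) *
      (((x' + b) + Real.sqrt ((x' + b) ^ 2 - 4 * A * t ^ 2)) / (2 * t)))
      (((0 * (-(x + b) + s) - 2 * p₁ * (-1 + 1 / (2 * s) * (2 * (x + b) ^ 1 * 1))) /
          (-(x + b) + s) ^ 2) * (((x + b) + s) / (2 * t)) +
        (2 * p₁ / (-(x + b) + s)) * ((1 + 1 / (2 * s) * (2 * (x + b) ^ 1 * 1)) / (2 * t))) x :=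
    hρx.mul hux
  simp only
  rw [hρt.deriv, hρx.deriv, hux.deriv, hut.deriv, hρux.deriv, ← hs]
  clear_value s
  have hs2' : s * s = (x + b) ^ 2 - 4 * A * t ^ 2 := by nlinarith [hs2]
  have hs0 : s ≠ 0 := hspos.ne'
  have hden2 : (-b + -x + s) ≠ 0 := by rw [show -b + -x + s = -(x+b) + s by ring]; exact hden'
  have hd1 : 2 * s * (-b + -x + s) ^ 2 ≠ 0 :=
    mul_ne_zero (mul_ne_zero two_ne_zero hs0) (pow_ne_zero 2 hden2)
  have hd2 : 2 * s * (-b + -x + s) ^ 2 * (2 * t) ≠ 0 := mul_ne_zero hd1 h2t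
  have hd3 : (-b + -x + s) * (2 * s * (2 * t)) ≠ 0 :=
    mul_ne_zero hden2 (mul_ne_zero (mul_ne_zero two_ne_zero hs0) h2t)
  constructor
  · field_simp [hden', ht', hs0]
    linear_combination (4*p₁) * hs2'
  · field_simp [hden', ht', hs0]
    linear_combination (-p₁*(s-(x+b))) * hs2'
end

section
/- Let e₂ ≠ 0, e₃ ≠ 0 and define W(x,t) = √(2e₃p₂ + (e₃t + e₄)² − 2e₂e₃x). On a domain where 2e₃p₂ + (e₃t+e₄)² − 2e₂e₃x > 0, the functions ρ = p₁/W and u = e₃t/e₂ + (e₄ − W)/e₂ solve the pressureless inviscid traffic system ρₜ + (ρu)ₓ = 0, uₜ + u uₓ = 0 (A = D = 0), provided p₁ ≠ 0. -/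
/-- With W(x,t) = √(2e₃p₂ + (e₃t + e₄)² − 2e₂e₃x), the functions ρ = p₁/W and
u = e₃t/e₂ + (e₄ − W)/e₂ solve the pressureless inviscid traffic system
ρₜ + (ρu)ₓ = 0, uₜ + u uₓ = 0 on the domain where the radicand is positive. -/
theorem stmt8 (e₂ e₃ e₄ p₁ p₂ : ℝ) (he₂ : e₂ ≠ 0) (he₃ : e₃ ≠ 0) (hp₁ : p₁ ≠ 0)
    (W ρ u : ℝ → ℝ → ℝ)
    (hW : W = fun x t => Real.sqrt (2 * e₃ * p₂ + (e₃ * t + e₄) ^ 2 - 2 * e₂ * e₃ * x))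
    (hρ : ρ = fun x t => p₁ / W x t)
    (hu : u = fun x t => e₃ * t / e₂ + (e₄ - W x t) / e₂) :
    ∀ x t : ℝ, 2 * e₃ * p₂ + (e₃ * t + e₄) ^ 2 - 2 * e₂ * e₃ * x > 0 →
      deriv (fun s => ρ x s) t + deriv (fun y => ρ y t * u y t) x = 0 ∧
      deriv (fun s => u x s) t + u x t * deriv (fun y => u y t) x = 0 := by
  subst hW hρ hu
  intro x t hpos
  set c : ℝ := Real.sqrt (2 * e₃ * p₂ + (e₃ * t + e₄) ^ 2 - 2 * e₂ * e₃ * x) with hc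
  have hcpos : 0 < c := Real.sqrt_pos.mpr hpos
  have hcne : c ≠ 0 := hcpos.ne'
  -- derivative of W in t
  have hin_t : HasDerivAt (fun s : ℝ => 2 * e₃ * p₂ + (e₃ * s + e₄) ^ 2 - 2 * e₂ * e₃ * x)
      (2 * (e₃ * t + e₄) * e₃) t := by
    have h1 : HasDerivAt (fun s : ℝ => e₃ * s + e₄) e₃ t := by
      simpa using ((hasDerivAt_id t).const_mul e₃).add_const e₄
    have := ((h1.pow 2).const_add (2 * e₃ * p₂)).sub_const (2 * e₂ * e₃ * x)
    exact this.congr_deriv (by norm_num)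
  have hW_t : HasDerivAt (fun s : ℝ =>
      Real.sqrt (2 * e₃ * p₂ + (e₃ * s + e₄) ^ 2 - 2 * e₂ * e₃ * x))
      (e₃ * (e₃ * t + e₄) / c) t := by
    have := hin_t.sqrt hpos.ne'
    convert this using 1
    rw [← hc]; field_simp
  -- derivative of W in x
  have hin_x : HasDerivAt (fun y : ℝ => 2 * e₃ * p₂ + (e₃ * t + e₄) ^ 2 - 2 * e₂ * e₃ * y)
      (-(2 * e₂ * e₃)) x := by
    have := ((hasDerivAt_id x).const_mul (2 * e₂ * e₃)).const_sub
      (2 * e₃ * p₂ + (e₃ * t + e₄) ^ 2)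
    exact this.congr_deriv (by ring)
  have hW_x : HasDerivAt (fun y : ℝ =>
      Real.sqrt (2 * e₃ * p₂ + (e₃ * t + e₄) ^ 2 - 2 * e₂ * e₃ * y))
      (-(e₂ * e₃) / c) x := by
    have := hin_x.sqrt hpos.ne'
    convert this using 1
    rw [← hc]; field_simp
  -- component derivatives
  have hρ_t : HasDerivAt (fun s : ℝ =>
      p₁ / Real.sqrt (2 * e₃ * p₂ + (e₃ * s + e₄) ^ 2 - 2 * e₂ * e₃ * x))
      ((0 * c - p₁ * (e₃ * (e₃ * t + e₄) / c)) / c ^ 2) t :=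
    (hasDerivAt_const t p₁).div hW_t hcne
  have hρ_x : HasDerivAt (fun y : ℝ =>
      p₁ / Real.sqrt (2 * e₃ * p₂ + (e₃ * t + e₄) ^ 2 - 2 * e₂ * e₃ * y))
      ((0 * c - p₁ * (-(e₂ * e₃) / c)) / c ^ 2) x :=
    (hasDerivAt_const x p₁).div hW_x hcne
  have hu_t : HasDerivAt (fun s : ℝ =>
      e₃ * s / e₂ + (e₄ - Real.sqrt (2 * e₃ * p₂ + (e₃ * s + e₄) ^ 2 - 2 * e₂ * e₃ * x)) / e₂)
      (e₃ / e₂ + (0 - e₃ * (e₃ * t + e₄) / c) / e₂) t := by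
    have h := (((hasDerivAt_id t).const_mul e₃).div_const e₂).add
      (((hasDerivAt_const t e₄).sub hW_t).div_const e₂)
    exact h.congr_deriv (by ring)
  have hu_x : HasDerivAt (fun y : ℝ =>
      e₃ * t / e₂ + (e₄ - Real.sqrt (2 * e₃ * p₂ + (e₃ * t + e₄) ^ 2 - 2 * e₂ * e₃ * y)) / e₂)
      (0 + (0 - -(e₂ * e₃) / c) / e₂) x := by
    exact (hasDerivAt_const x (e₃ * t / e₂)).add
      (((hasDerivAt_const x e₄).sub hW_x).div_const e₂)
  have hρu_x : HasDerivAt (fun y : ℝ =>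
      (p₁ / Real.sqrt (2 * e₃ * p₂ + (e₃ * t + e₄) ^ 2 - 2 * e₂ * e₃ * y)) *
      (e₃ * t / e₂ + (e₄ - Real.sqrt (2 * e₃ * p₂ + (e₃ * t + e₄) ^ 2 - 2 * e₂ * e₃ * y)) / e₂))
      (((0 * c - p₁ * (-(e₂ * e₃) / c)) / c ^ 2) * (e₃ * t / e₂ + (e₄ - c) / e₂)
        + (p₁ / c) * (0 + (0 - -(e₂ * e₃) / c) / e₂)) x := by
    have := hρ_x.mul hu_x
    rw [← hc] at this
    exact this
  constructor
  · rw [hρ_t.deriv, hρu_x.deriv]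
    field_simp
    ring
  · rw [hu_t.deriv, hu_x.deriv]
    beta_reduce
    rw [← hc]
    field_simp
    ring
end

section
/- For A > 0 and τ with τ² > 4A, the functions Z(τ) = (τ + √(τ²−4A))/2 and Y(τ) = 2p₁/(−τ + √(τ²−4A)) (with p₁ ≠ 0; note −τ + √(τ²−4A) ≠ 0) satisfy Y Z' + Y'Z − τY' − Y = 0 and −τZ' + ZZ' + A Y'/Y = 0. -/
/-- For A > 0 and τ² > 4A, Z(τ) = (τ + √(τ²−4A))/2 and
Y(τ) = 2p₁/(−τ + √(τ²−4A)) (p₁ ≠ 0) satisfy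
Y Z' + Y'Z − τY' − Y = 0 and −τZ' + ZZ' + A·Y'/Y = 0. -/
theorem stmt18 (A p₁ : ℝ) (hA : 0 < A) (hp₁ : p₁ ≠ 0)
    (Y Z : ℝ → ℝ)
    (hZ : Z = fun τ => (τ + Real.sqrt (τ ^ 2 - 4 * A)) / 2)
    (hY : Y = fun τ => 2 * p₁ / (-τ + Real.sqrt (τ ^ 2 - 4 * A))) :
    ∀ τ, τ ^ 2 > 4 * A →
      Y τ * deriv Z τ + deriv Y τ * Z τ - τ * deriv Y τ - Y τ = 0 ∧
      -τ * deriv Z τ + Z τ * deriv Z τ + A * deriv Y τ / Y τ = 0 := by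
  intro τ hτ
  have hu : (0:ℝ) < τ ^ 2 - 4 * A := by linarith
  set s := Real.sqrt (τ ^ 2 - 4 * A) with hsdef
  have hs0 : 0 < s := Real.sqrt_pos.mpr hu
  have hs2 : s ^ 2 = τ ^ 2 - 4 * A := Real.sq_sqrt hu.le
  have hsne : s ≠ 0 := ne_of_gt hs0
  have hdne : -τ + s ≠ 0 := by
    intro h
    have : s = τ := by linarith
    rw [this] at hs2
    linarith
  -- derivative of the inner function
  have hin : HasDerivAt (fun t : ℝ => t ^ 2 - 4 * A) (2 * τ) τ := by
    simpa using ((hasDerivAt_pow 2 τ).sub_const (4 * A))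
  have hsq : HasDerivAt (fun t : ℝ => Real.sqrt (t ^ 2 - 4 * A)) (τ / s) τ := by
    have h := (Real.hasDerivAt_sqrt (ne_of_gt hu)).comp τ hin
    refine HasDerivAt.congr_deriv h ?_
    rw [← hsdef]
    field_simp
  have hZd : HasDerivAt Z ((1 + τ / s) / 2) τ := by
    rw [hZ]
    exact ((hasDerivAt_id τ).add hsq).div_const 2
  have hden : HasDerivAt (fun t : ℝ => -t + Real.sqrt (t ^ 2 - 4 * A)) (-1 + τ / s) τ :=
    (hasDerivAt_id τ).neg.add hsq
  have hYd : HasDerivAt Y ((0 * (-τ + s) - 2 * p₁ * (-1 + τ / s)) / (-τ + s) ^ 2) τ := by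
    rw [hY]
    exact (hasDerivAt_const τ (2 * p₁)).div hden hdne
  have hZτ : Z τ = (τ + s) / 2 := by rw [hZ]
  have hYτ : Y τ = 2 * p₁ / (-τ + s) := by rw [hY]
  rw [hZd.deriv, hYd.deriv, hZτ, hYτ]
  constructor
  · field_simp
    nlinarith [hs2, sq_nonneg s]
  · field_simp
    linear_combination (p₁ * (s - τ)) * hs2
end
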